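/- Let G be a graph and B a PSD forcing set of size k. Let C_1,…,C_m be the components of G − B, indexed so that pt_+(G[V(C_i) ∪ B]; B) is nondecreasing in i (with the convention C_1 = ∅ and C_2 = G − B if G − B is connected). If pt_+(G;B) = pt_+(G,k) (i.e., B is k-efficient), then pt_+(G[V(C_m) ∪ B]; B) − pt_+(G[V(C_{m−1}) ∪ B]; B) ≤ 1. -/

import Mathlib

open SimpleGraph Set

variable {V : Type*}

/-- The subgraph of `G` obtained by deleting the vertices of `B`
(kept as isolated vertices). -/
def delVerts (G : SimpleGraph V) (B : Set V) : SimpleGraph V where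
  Adj a b := G.Adj a b ∧ a ∉ B ∧ b ∉ B
  symm := ⟨fun _ _ ⟨h, ha, hb⟩ => ⟨h.symm, hb, ha⟩⟩
  loopless := ⟨fun _ ⟨h, _, _⟩ => G.irrefl h⟩

/-- `u` may PSD-force `w` when the set of blue vertices is `B`:  `u` is blue, `w` is a white
neighbor of `u`, and `w` is the unique white neighbor of `u` in the component of `G - B`
containing `w`. -/
def PSDForce (G : SimpleGraph V) (B : Set V) (u w : V) : Prop :=
  u ∈ B ∧ w ∉ B ∧ G.Adj u w ∧
    ∀ x, G.Adj u x → x ∉ B → (delVerts G B).Reachable x w → x = w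

/-- One round of simultaneous PSD forcing starting from blue set `B`. -/
def psdStep (G : SimpleGraph V) (B : Set V) : Set V :=
  B ∪ {w | ∃ u, PSDForce G B u w}

/-- `B` is a PSD forcing set of `G`. -/
def IsPSDForcingSet (G : SimpleGraph V) (B : Set V) : Prop :=
  ∃ t, (psdStep G)^[t] B = Set.univ

/-- The PSD propagation time `pt_+(G; B)` of the set `B` in `G`. -/
noncomputable def psdPropTime (G : SimpleGraph V) (B : Set V) : ℕ :=
  sInf {t | (psdStep G)^[t] B = Set.univ}

/-- The PSD zero forcing number `Z_+(G)`. -/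
noncomputable def psdZ (G : SimpleGraph V) : ℕ :=
  sInf {k | ∃ B : Set V, IsPSDForcingSet G B ∧ B.ncard = k}

/-- The `k`-PSD propagation time `pt_+(G, k)`: the minimum of `pt_+(G; B)` over
PSD forcing sets `B` of size `k`. -/
noncomputable def psdPt (G : SimpleGraph V) (k : ℕ) : ℕ :=
  sInf {t | ∃ B : Set V, IsPSDForcingSet G B ∧ B.ncard = k ∧ psdPropTime G B = t}

/-- The PSD propagation time `pt_+(G) = pt_+(G, Z_+(G))`. -/
noncomputable def psdPtG (G : SimpleGraph V) : ℕ := psdPt G (psdZ G)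

/-- The PSD propagation time of `B` within the induced subgraph `G[U]` (for `B ⊆ U`),
realized by making the vertices outside `U` isolated and initially blue. -/
noncomputable def psdPropTimeOn (G : SimpleGraph V) (U B : Set V) : ℕ :=
  psdPropTime (delVerts G Uᶜ) (B ∪ Uᶜ)

/-- The vertex set of the component of `G - B` containing the white vertex `w`. -/
def compOf (G : SimpleGraph V) (B : Set V) (w : V) : Set V :=
  {x | x ∉ B ∧ (delVerts G B).Reachable x w}

/-!
If `pt_+(G;B) = T ≥ p + 2`, where `p` bounds the propagation times of all components of `G - B`
other than the component `C` of `w`, trade every vertex of `B` that forces into `C` in the first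
round for the vertex it forces. The resulting set `B'` has size `|B|`: a forcer into the single
component `C` has exactly one neighbour in `C`, so forcers and forced vertices correspond
bijectively, and for the same reason each traded vertex is forced back in the first round from
`B'`. From then on the process from `B'` is one round ahead of the process from `B` on `C` and at
most one round behind elsewhere. Forcing inside a component of `G - B` only sees the component
and `B`, so the other components are blue by round `p`, and `B'` colours `G` by round `T - 1`,
contradicting efficiency.
-/

namespace SimpleGraph.Reachable

lemma invariant_of_adj {G H : SimpleGraph V} {P : V → Prop}
    (hP : ∀ a b, G.Adj a b → P a → P b ∧ H.Adj a b) {x y : V}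
    (h : G.Reachable x y) (hx : P x) : P y ∧ H.Reachable x y := by
  obtain ⟨p⟩ := h
  induction p with
  | nil => exact ⟨hx, .rfl⟩
  | cons hadj _ ih =>
      obtain ⟨hb, hH⟩ := hP _ _ hadj hx
      obtain ⟨hy, hr⟩ := ih hb
      exact ⟨hy, hH.reachable.trans hr⟩

end SimpleGraph.Reachable

section Forcing

variable {G : SimpleGraph V}

/-- A force survives a change of graph and of blue set as long as, from `w`, the new white
component stays inside a region `D` whose new white edges are old white edges. -/
lemma PSDForce.transfer {H : SimpleGraph V} {A A' D : Set V} {u w : V}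
    (hf : PSDForce G A u w) (hu : u ∈ A') (hwD : w ∈ D) (hwA' : w ∉ A') (huw : H.Adj u w)
    (hD : ∀ a ∈ D, ∀ b, H.Adj a b → b ∉ A' → b ∈ D ∧ G.Adj a b ∧ b ∉ A)
    (hDu : ∀ x ∈ D, H.Adj u x → G.Adj u x) :
    PSDForce H A' u w := by
  refine ⟨hu, hwA', huw, fun x hux hxA' hxw => ?_⟩
  have hinv : ∀ a b, (delVerts H A').Adj a b → a ∈ D ∧ a ∉ A →
      (b ∈ D ∧ b ∉ A) ∧ (delVerts G A).Adj a b := by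
    rintro a b ⟨hab, -, hbA'⟩ ⟨haD, haA⟩
    obtain ⟨hbD, hGab, hbA⟩ := hD a haD b hab hbA'
    exact ⟨⟨hbD, hbA⟩, hGab, haA, hbA⟩
  obtain ⟨⟨hxD, hxA⟩, hwx⟩ := hxw.symm.invariant_of_adj hinv ⟨hwD, hf.2.1⟩
  exact hf.2.2.2 x (hDu x hxD hux) hxA hwx.symm

lemma subset_psdStep (G : SimpleGraph V) (A : Set V) : A ⊆ psdStep G A :=
  subset_union_left

lemma psdStep_mono {A A' : Set V} (h : A ⊆ A') : psdStep G A ⊆ psdStep G A' := by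
  rintro w (hw | ⟨u, hf⟩)
  · exact subset_psdStep G A' (h hw)
  by_cases hwA' : w ∈ A'
  · exact subset_psdStep G A' hwA'
  refine Or.inr ⟨u, hf.transfer (D := A'ᶜ) (h hf.1) hwA' hwA' hf.2.2.1 ?_ fun _ _ => id⟩
  exact fun a ha b hab hb => ⟨hb, hab, fun hbA => hb (h hbA)⟩

lemma subset_iterate_psdStep (G : SimpleGraph V) (A : Set V) (n : ℕ) :
    A ⊆ (psdStep G)^[n] A := by
  induction n with
  | zero => exact subset_rfl
  | succ n ih =>
      rw [Function.iterate_succ_apply']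
      exact ih.trans (subset_psdStep G _)

lemma iterate_psdStep_mono (G : SimpleGraph V) (A : Set V) {m n : ℕ} (h : m ≤ n) :
    (psdStep G)^[m] A ⊆ (psdStep G)^[n] A := by
  obtain ⟨r, rfl⟩ := Nat.exists_eq_add_of_le h
  rw [add_comm, Function.iterate_add_apply]
  exact subset_iterate_psdStep G _ r

lemma iterate_psdStep_subset_iterate {A A' : Set V} (h : A ⊆ A') (n : ℕ) :
    (psdStep G)^[n] A ⊆ (psdStep G)^[n] A' := by
  induction n with
  | zero => exact h
  | succ n ih =>
      rw [Function.iterate_succ_apply', Function.iterate_succ_apply']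
      exact psdStep_mono ih

lemma iterate_psdStep_subset_succ {B B' : Set V} (h : B ⊆ psdStep G B') (n : ℕ) :
    (psdStep G)^[n] B ⊆ (psdStep G)^[n + 1] B' := by
  rw [Function.iterate_succ_apply]
  exact iterate_psdStep_subset_iterate h n

lemma iterate_psdPropTime {B : Set V} (hB : IsPSDForcingSet G B) :
    (psdStep G)^[psdPropTime G B] B = univ :=
  Nat.sInf_mem hB

lemma psdPropTime_le {B : Set V} {t : ℕ} (h : (psdStep G)^[t] B = univ) :
    psdPropTime G B ≤ t :=
  Nat.sInf_le h

lemma psdPt_le_psdPropTime {B : Set V} (hB : IsPSDForcingSet G B) :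
    psdPt G B.ncard ≤ psdPropTime G B :=
  Nat.sInf_le ⟨B, hB, rfl, rfl⟩

end Forcing

section Localization

variable {G : SimpleGraph V} {B C : Set V}

lemma mem_union_of_adj (hC : ∀ a ∈ C, ∀ b, G.Adj a b → b ∉ B → b ∈ C) {u w : V}
    (hw : w ∈ C) (huw : G.Adj u w) : u ∈ C ∪ B := by
  by_cases hu : u ∈ B
  · exact Or.inr hu
  · exact Or.inl (hC w hw u huw.symm hu)

lemma psdStep_local_inter_eq (hC : ∀ a ∈ C, ∀ b, G.Adj a b → b ∉ B → b ∈ C) {L S : Set V}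
    (hL : B ∪ (C ∪ B)ᶜ ⊆ L) (hS : B ⊆ S) (hLS : L ∩ C = S ∩ C) :
    psdStep (delVerts G (C ∪ B)ᶜ) L ∩ C = psdStep G S ∩ C := by
  have hBL : B ⊆ L := subset_union_left.trans hL
  have hmem : ∀ x ∈ C, x ∈ L ↔ x ∈ S := fun x hx => by
    simpa only [mem_inter_iff, hx, and_true] using Set.ext_iff.mp hLS x
  ext w
  constructor
  · rintro ⟨hw | ⟨u, hf⟩, hwC⟩
    · exact ⟨subset_psdStep G S ((hmem w hwC).mp hw), hwC⟩
    refine ⟨?_, hwC⟩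
    by_cases hwS : w ∈ S
    · exact subset_psdStep G S hwS
    have huCB : u ∈ C ∪ B := not_not.mp hf.2.2.1.2.1
    have hu : u ∈ S := huCB.elim (fun huC => (hmem u huC).mp hf.1) (@hS u)
    refine Or.inr ⟨u, hf.transfer (D := C \ S) hu ⟨hwC, hwS⟩ hwS hf.2.2.1.1 ?_ ?_⟩
    · rintro a ⟨haC, -⟩ b hab hbS
      have hbC : b ∈ C := hC a haC b hab fun hbB => hbS (hS hbB)
      exact ⟨⟨hbC, hbS⟩, ⟨hab, fun h => h (Or.inl haC), fun h => h (Or.inl hbC)⟩,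
        fun hbL => hbS ((hmem b hbC).mp hbL)⟩
    · exact fun x ⟨hxC, _⟩ hux => ⟨hux, fun h => h huCB, fun h => h (Or.inl hxC)⟩
  · rintro ⟨hw | ⟨u, hf⟩, hwC⟩
    · exact ⟨subset_psdStep _ L ((hmem w hwC).mpr hw), hwC⟩
    refine ⟨?_, hwC⟩
    by_cases hwL : w ∈ L
    · exact subset_psdStep _ L hwL
    have huCB : u ∈ C ∪ B := mem_union_of_adj hC hwC hf.2.2.1
    have hu : u ∈ L := huCB.elim (fun huC => (hmem u huC).mpr hf.1) (@hBL u)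
    refine Or.inr ⟨u, hf.transfer (D := C \ L) hu ⟨hwC, hwL⟩ hwL
      ⟨hf.2.2.1, fun h => h huCB, fun h => h (Or.inl hwC)⟩ ?_ fun _ _ hux => hux.1⟩
    rintro a ⟨haC, -⟩ b ⟨hab, -, hbCB⟩ hbL
    have hbC : b ∈ C := (not_not.mp hbCB).resolve_right fun hbB => hbL (hBL hbB)
    exact ⟨⟨hbC, hbL⟩, hab, fun hbS => hbL ((hmem b hbC).mpr hbS)⟩

lemma iterate_psdStep_local_inter_eq (hC : ∀ a ∈ C, ∀ b, G.Adj a b → b ∉ B → b ∈ C) (t : ℕ) :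
    (psdStep (delVerts G (C ∪ B)ᶜ))^[t] (B ∪ (C ∪ B)ᶜ) ∩ C = (psdStep G)^[t] B ∩ C := by
  induction t with
  | zero =>
      ext x
      simp only [Function.iterate_zero, id, mem_inter_iff, mem_union, mem_compl_iff]
      tauto
  | succ t ih =>
      rw [Function.iterate_succ_apply', Function.iterate_succ_apply']
      exact psdStep_local_inter_eq hC (subset_iterate_psdStep _ _ t)
        (subset_iterate_psdStep G B t) ih

lemma subset_iterate_psdPropTimeOn (hC : ∀ a ∈ C, ∀ b, G.Adj a b → b ∉ B → b ∈ C)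
    (hB : IsPSDForcingSet G B) : C ⊆ (psdStep G)^[psdPropTimeOn G (C ∪ B) B] B := by
  have hmem : ∀ t, ∀ x ∈ C, x ∈ (psdStep (delVerts G (C ∪ B)ᶜ))^[t] (B ∪ (C ∪ B)ᶜ) ↔
      x ∈ (psdStep G)^[t] B := fun t x hx => by
    simpa only [mem_inter_iff, hx, and_true] using
      Set.ext_iff.mp (iterate_psdStep_local_inter_eq hC t) x
  obtain ⟨T, hT⟩ := hB
  have hlocal : IsPSDForcingSet (delVerts G (C ∪ B)ᶜ) (B ∪ (C ∪ B)ᶜ) := by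
    refine ⟨T, eq_univ_of_forall fun x => ?_⟩
    by_cases hxC : x ∈ C
    · exact (hmem T x hxC).mpr (hT ▸ mem_univ x)
    refine subset_iterate_psdStep _ _ T ?_
    by_cases hxB : x ∈ B
    · exact Or.inl hxB
    · exact Or.inr fun h => h.elim hxC hxB
  exact fun x hxC => (hmem _ x hxC).mp ((iterate_psdPropTime hlocal).symm ▸ mem_univ x)

lemma compOf_closed {B : Set V} {w a b : V} (ha : a ∈ compOf G B w) (hab : G.Adj a b)
    (hb : b ∉ B) : b ∈ compOf G B w :=
  ⟨hb, (Adj.reachable (G := delVerts G B) ⟨hab.symm, hb, ha.1⟩).trans ha.2⟩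

end Localization

section Swap

/- `f v` is a chosen forcer of each vertex `v` of `C` coloured in the first round, and
`B \ f '' (psdStep G B ∩ C) ∪ psdStep G B ∩ C` is `B` with these forcers traded for the vertices
they force. -/
variable {G : SimpleGraph V} {B C : Set V} {f : V → V}

lemma mem_diff_of_adj_of_swap (hC : ∀ a ∈ C, ∀ b, G.Adj a b → b ∉ B → b ∈ C)
    (hfC : ∀ v ∈ psdStep G B ∩ C, ∀ z ∈ C, G.Adj (f v) z → z = v) {S A : Set V}
    (hFS : psdStep G B ∩ C ⊆ S) (hA : B \ f '' (psdStep G B ∩ C) ∪ S ∩ C ⊆ A) {a b : V}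
    (ha : a ∈ C \ S) (hab : G.Adj a b) (hb : b ∉ A) : b ∈ C \ S := by
  have hbB : b ∉ B := by
    intro hbB
    obtain ⟨v, hv, rfl⟩ : b ∈ f '' (psdStep G B ∩ C) :=
      by_contra fun hbU => hb (hA (Or.inl ⟨hbB, hbU⟩))
    exact ha.2 (hfC v hv a ha.1 hab.symm ▸ hFS hv)
  have hbC := hC a ha.1 b hab hbB
  exact ⟨hbC, fun hbS => hb (hA (Or.inr ⟨hbS, hbC⟩))⟩

lemma subset_psdStep_swap (hC : ∀ a ∈ C, ∀ b, G.Adj a b → b ∉ B → b ∈ C)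
    (hf : ∀ v ∈ psdStep G B ∩ C, PSDForce G B (f v) v)
    (hfC : ∀ v ∈ psdStep G B ∩ C, ∀ z ∈ C, G.Adj (f v) z → z = v) :
    B ⊆ psdStep G (B \ f '' (psdStep G B ∩ C) ∪ psdStep G B ∩ C) := by
  intro y hyB
  by_cases hyU : y ∈ f '' (psdStep G B ∩ C)
  swap
  · exact subset_psdStep _ _ (Or.inl ⟨hyB, hyU⟩)
  obtain ⟨v, hv, rfl⟩ := hyU
  have hfv : f v ∉ B \ f '' (psdStep G B ∩ C) ∪ psdStep G B ∩ C := by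
    rintro (⟨-, h⟩ | h)
    · exact h ⟨v, hv, rfl⟩
    · exact (hf _ h).2.1 hyB
  refine Or.inr ⟨v, Or.inr hv, hfv, (hf v hv).2.2.1.symm, fun x hvx hx hxfv => ?_⟩
  by_cases hxB : x ∈ B
  · obtain ⟨v', hv', rfl⟩ : x ∈ f '' (psdStep G B ∩ C) :=
      by_contra fun h => hx (Or.inl ⟨hxB, h⟩)
    rw [hfC v' hv' v hv.2 hvx.symm]
  -- a white walk from `x ∈ C` cannot leave `C`, so it never reaches the blue vertex `f v`
  have hinv : ∀ a b, (delVerts G _).Adj a b → a ∈ C \ psdStep G B →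
      b ∈ C \ psdStep G B ∧ G.Adj a b := fun a b hab ha =>
    ⟨mem_diff_of_adj_of_swap hC hfC inter_subset_left subset_rfl ha hab.1 hab.2.2, hab.1⟩
  have hxC : x ∈ C := hC v hv.2 x hvx hxB
  have hfvC := (hxfv.invariant_of_adj hinv ⟨hxC, fun h => hx (Or.inr ⟨h, hxC⟩)⟩).1
  exact absurd (subset_psdStep G B hyB) hfvC.2

lemma psdStep_inter_subset_of_swap (hC : ∀ a ∈ C, ∀ b, G.Adj a b → b ∉ B → b ∈ C)
    (hfC : ∀ v ∈ psdStep G B ∩ C, ∀ z ∈ C, G.Adj (f v) z → z = v) {S A : Set V}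
    (hFS : psdStep G B ∩ C ⊆ S) (hA : B \ f '' (psdStep G B ∩ C) ∪ S ∩ C ⊆ A) :
    psdStep G S ∩ C ⊆ psdStep G A := by
  rintro w ⟨hw, hwC⟩
  by_cases hwA : w ∈ A
  · exact subset_psdStep G A hwA
  have hwS : w ∉ S := fun h => hwA (hA (Or.inr ⟨h, hwC⟩))
  obtain ⟨u, hf⟩ := hw.resolve_left hwS
  have hu : u ∈ A := by
    rcases mem_union_of_adj hC hwC hf.2.2.1 with huC | huB
    · exact hA (Or.inr ⟨hf.1, huC⟩)
    · refine hA (Or.inl ⟨huB, ?_⟩)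
      rintro ⟨v, hv, rfl⟩
      exact hwS (hfC v hv w hwC hf.2.2.1 ▸ hFS hv)
  refine Or.inr ⟨u, hf.transfer (D := C \ S) hu ⟨hwC, hwS⟩ hwA hf.2.2.1 ?_ fun _ _ => id⟩
  intro a ha b hab hb
  have hb' := mem_diff_of_adj_of_swap hC hfC hFS hA ha hab hb
  exact ⟨hb', hab, hb'.2⟩

lemma iterate_psdStep_inter_subset_swap (hC : ∀ a ∈ C, ∀ b, G.Adj a b → b ∉ B → b ∈ C)
    (hfC : ∀ v ∈ psdStep G B ∩ C, ∀ z ∈ C, G.Adj (f v) z → z = v) (n : ℕ) :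
    (psdStep G)^[n + 1] B ∩ C ⊆
      (psdStep G)^[n] (B \ f '' (psdStep G B ∩ C) ∪ psdStep G B ∩ C) := by
  induction n with
  | zero => exact subset_union_right
  | succ n ih =>
      rw [Function.iterate_succ_apply' _ (n + 1) B, Function.iterate_succ_apply' _ n (_ ∪ _)]
      refine psdStep_inter_subset_of_swap hC hfC ?_ (union_subset ?_ ih)
      · exact inter_subset_left.trans (iterate_psdStep_mono G B (by omega : 1 ≤ n + 1))
      · exact subset_union_left.trans (subset_iterate_psdStep G _ n)

lemma ncard_swap [Finite V] (hf : ∀ v ∈ psdStep G B ∩ C, PSDForce G B (f v) v)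
    (hfC : ∀ v ∈ psdStep G B ∩ C, ∀ z ∈ C, G.Adj (f v) z → z = v) :
    (B \ f '' (psdStep G B ∩ C) ∪ psdStep G B ∩ C).ncard = B.ncard := by
  have hdisj : Disjoint (B \ f '' (psdStep G B ∩ C)) (psdStep G B ∩ C) :=
    disjoint_right.mpr fun v hv hvB => (hf v hv).2.1 hvB.1
  have hUB : f '' (psdStep G B ∩ C) ⊆ B := image_subset_iff.mpr fun v hv => (hf v hv).1
  have hinj : InjOn f (psdStep G B ∩ C) := fun v hv v' hv' h =>
    (hfC v hv v' hv'.2 (h ▸ (hf v' hv').2.2.1)).symm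
  have hle := ncard_le_ncard hUB
  rw [hinj.ncard_image] at hle
  rw [ncard_union_eq hdisj, ncard_sdiff hUB, hinj.ncard_image]
  omega

lemma exists_forcers_compOf (G : SimpleGraph V) (B : Set V) (w : V) :
    ∃ f : V → V, (∀ v ∈ psdStep G B ∩ compOf G B w, PSDForce G B (f v) v) ∧
      ∀ v ∈ psdStep G B ∩ compOf G B w, ∀ z ∈ compOf G B w, G.Adj (f v) z → z = v := by
  have hex : ∀ v, ∃ u, v ∈ psdStep G B ∩ compOf G B w → PSDForce G B u v := fun v => by
    by_cases hv : v ∈ psdStep G B ∩ compOf G B w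
    · obtain ⟨u, hu⟩ := hv.1.resolve_left hv.2.1
      exact ⟨u, fun _ => hu⟩
    · exact ⟨v, fun h => absurd h hv⟩
  choose f hf using hex
  exact ⟨f, hf, fun v hv z hz hadj => (hf v hv).2.2.2 z hadj hz.1 (hz.2.trans hv.2.2.symm)⟩

lemma exists_ncard_eq_ahead_on_compOf [Finite V] (G : SimpleGraph V) (B : Set V) (w : V) :
    ∃ B' : Set V, B'.ncard = B.ncard ∧ B ⊆ psdStep G B' ∧
      ∀ n, (psdStep G)^[n + 1] B ∩ compOf G B w ⊆ (psdStep G)^[n] B' := by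
  obtain ⟨f, hf, hfC⟩ := exists_forcers_compOf G B w
  have hC : ∀ a ∈ compOf G B w, ∀ b, G.Adj a b → b ∉ B → b ∈ compOf G B w :=
    fun _ ha _ => compOf_closed ha
  exact ⟨_, ncard_swap hf hfC, subset_psdStep_swap hC hf hfC,
    iterate_psdStep_inter_subset_swap hC hfC⟩

end Swap

/-- if `B` is a `k`-efficient PSD forcing set, then the largest component
propagation time exceeds the second largest by at most one.  Equivalently (the form stated
here): for every component `C` of `G - B` (say the component of a white vertex `w`),
`pt_+(G;B)` is at most one more than the maximum of `pt_+(G[V(C') ∪ B]; B)` over the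
components `C'` of `G - B` different from `C` (the empty maximum being `0`, which encodes
the convention `C₁ = ∅` when `G - B` is connected). -/
theorem stmt10 [Fintype V] (G : SimpleGraph V) (B : Set V) (k : ℕ)
    (hB : IsPSDForcingSet G B) (hk : B.ncard = k)
    (heff : psdPropTime G B = psdPt G k) :
    ∀ w ∉ B, psdPropTime G B ≤
      sSup ((fun w' => psdPropTimeOn G (compOf G B w' ∪ B) B) ''
        {w' | w' ∉ B ∧ ¬ (delVerts G B).Reachable w' w}) + 1 := by
  intro w _
  set p := sSup ((fun w' => psdPropTimeOn G (compOf G B w' ∪ B) B) ''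
    {w' | w' ∉ B ∧ ¬ (delVerts G B).Reachable w' w})
  set T := psdPropTime G B
  have hothers : ∀ z ∉ B, ¬ (delVerts G B).Reachable z w → z ∈ (psdStep G)^[p] B := by
    intro z hz hzw
    have hle : psdPropTimeOn G (compOf G B z ∪ B) B ≤ p :=
      le_csSup (toFinite _).bddAbove ⟨z, ⟨hz, hzw⟩, rfl⟩
    exact iterate_psdStep_mono G B hle
      (subset_iterate_psdPropTimeOn (fun _ ha _ => compOf_closed ha) hB ⟨hz, .rfl⟩)
  obtain ⟨B', hcard, hBB', hahead⟩ := exists_ncard_eq_ahead_on_compOf G B w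
  by_contra! hlt
  have hB' : (psdStep G)^[T - 1] B' = univ := by
    refine eq_univ_of_forall fun x => ?_
    by_cases hxB : x ∈ B
    · exact iterate_psdStep_mono G B' (by omega) (iterate_psdStep_subset_succ hBB' 0 hxB)
    by_cases hxw : (delVerts G B).Reachable x w
    · refine hahead (T - 1) ⟨?_, hxB, hxw⟩
      rw [Nat.sub_add_cancel (by omega), iterate_psdPropTime hB]
      trivial
    · exact iterate_psdStep_mono G B' (by omega)
        (iterate_psdStep_subset_succ hBB' p (hothers x hxB hxw))
  have hpt := (psdPt_le_psdPropTime ⟨_, hB'⟩).trans (psdPropTime_le hB')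
  rw [hcard, hk, ← heff] at hpt
  omega
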